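/- arXiv:1410.0707 — 10 statements merged into one kernel-verified Lean document; each statement's English description precedes it below -/
import Mathlib

section
/- Let G=(V,E) be a finite simple graph, s,t ∈ V two distinct terminal nodes, d a positive integer, and e ∈ E an edge. Then e is relevant for the two-terminal diameter-constrained structure function φ_d if and only if there exists a simple s–t path in G with at most d edges that contains e. -/
open Classical Finset

noncomputable section

/-- The two-terminal diameter-constrained structure function `φ_d`:
`PhiStruct s t d E'` holds iff the spanning subgraph `(V, E')` contains a simple
`s`–`t` path with at most `d` edges. -/
def PhiStruct {V : Type*} (s t : V) (d : ℕ) (E' : Finset (Sym2 V)) : Prop :=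
  ∃ w : (SimpleGraph.fromEdgeSet (↑E' : Set (Sym2 V))).Walk s t, w.IsPath ∧ w.length ≤ d

/-- The edge `e` is irrelevant for `φ_d`: `φ_d (E' ∪ {e}) = φ_d (E' \ {e})`
for every subset `E'` of the edge set of `G`. -/
def Irrelevant {V : Type*} [Fintype V] [DecidableEq V]
    (G : SimpleGraph V) [DecidableRel G.Adj] (s t : V) (d : ℕ) (e : Sym2 V) : Prop :=
  ∀ E' ⊆ G.edgeFinset,
    (PhiStruct s t d (insert e E') ↔ PhiStruct s t d (E'.erase e))

open SimpleGraph in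
lemma path_minus_edge_disconnects {V : Type*} {G : SimpleGraph V} :
    ∀ {s t : V} (w : G.Walk s t), w.IsPath → ∀ e ∈ w.edges,
      ¬ (SimpleGraph.fromEdgeSet {f | f ∈ w.edges ∧ f ≠ e}).Reachable s t := by
  intro s t w
  induction w with
  | nil => intro _ e he; simp at he
  | @cons s v t h w' ih =>
    intro hw e he hr
    rw [SimpleGraph.Walk.edges_cons, List.mem_cons] at he
    rw [SimpleGraph.Walk.cons_isPath_iff] at hw
    obtain ⟨hw', hs⟩ := hw
    set H := SimpleGraph.fromEdgeSet
      {f | f ∈ (SimpleGraph.Walk.cons h w').edges ∧ f ≠ e} with hH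
    have hst' : s ≠ t := fun hEq => hs (hEq ▸ w'.end_mem_support)
    obtain ⟨u⟩ := hr
    set p : H.Path s t := u.toPath with hp
    have hpp : (p : H.Walk s t).IsPath := p.2
    cases hpval : (p : H.Walk s t) with
    | nil => exact hst' rfl
    | @cons _ x _ a q =>
      rw [SimpleGraph.fromEdgeSet_adj] at a
      obtain ⟨⟨haE, hane⟩, hsx⟩ := a
      rw [SimpleGraph.Walk.edges_cons, List.mem_cons] at haE
      have hxv : s(s, x) = s(s, v) := by
        rcases haE with h1 | h2
        · exact h1
        · exact absurd (w'.fst_mem_support_of_mem_edges h2) hs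
      have hxveq : x = v := by
        rw [Sym2.eq_iff] at hxv
        rcases hxv with ⟨_, h2⟩ | ⟨h1, h2⟩
        · exact h2
        · exact absurd h1.symm h.ne'
      subst hxveq
      have hef : e ∈ w'.edges := by
        rcases he with h1 | h2
        · exact absurd (hxv.trans h1.symm) hane
        · exact h2
      rw [hpval, SimpleGraph.Walk.cons_isPath_iff] at hpp
      obtain ⟨hq, hsq⟩ := hpp
      have hqe : ∀ g ∈ q.edges,
          g ∈ (SimpleGraph.fromEdgeSet {f | f ∈ w'.edges ∧ f ≠ e}).edgeSet := by
        intro g hg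
        have hgH : g ∈ H.edgeSet := q.edges_subset_edgeSet hg
        rw [SimpleGraph.edgeSet_fromEdgeSet] at hgH ⊢
        obtain ⟨⟨hg1, hg2⟩, hg3⟩ := hgH
        refine ⟨⟨?_, hg2⟩, hg3⟩
        rw [SimpleGraph.Walk.edges_cons, List.mem_cons] at hg1
        rcases hg1 with h1 | h2
        · exact absurd (q.fst_mem_support_of_mem_edges (h1 ▸ hg)) hsq
        · exact h2
      exact ih hw' e hef ⟨q.transfer _ hqe⟩

/-- an edge `e` is relevant for the two-terminal diameter-constrained
structure function `φ_d` iff there is a simple `s`–`t` path in `G` with at most `d`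
edges containing `e`. -/
theorem relevant_iff_exists_short_path_through
    {V : Type*} [Fintype V] [DecidableEq V] (G : SimpleGraph V) [DecidableRel G.Adj]
    (s t : V) (hst : s ≠ t) (d : ℕ) (hd : 1 ≤ d) (e : Sym2 V) (he : e ∈ G.edgeSet) :
    ¬ Irrelevant G s t d e ↔
      ∃ w : G.Walk s t, w.IsPath ∧ w.length ≤ d ∧ e ∈ w.edges := by
  constructor
  · intro hIr
    rw [Irrelevant] at hIr
    push_neg at hIr
    obtain ⟨E', hE', hiff⟩ := hIr
    -- monotone: erase → insert
    have hmono : PhiStruct s t d (E'.erase e) → PhiStruct s t d (insert e E') := by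
      rintro ⟨w, hw, hl⟩
      refine ⟨w.transfer _ ?_, hw.transfer _, by rw [SimpleGraph.Walk.length_transfer]; exact hl⟩
      intro g hg
      have := w.edges_subset_edgeSet hg
      rw [SimpleGraph.edgeSet_fromEdgeSet] at this ⊢
      refine ⟨?_, this.2⟩
      simp only [coe_insert, Set.mem_insert_iff]
      exact Or.inr (mem_of_mem_erase (by exact_mod_cast this.1))
    have h1 : PhiStruct s t d (insert e E') ∧ ¬ PhiStruct s t d (E'.erase e) := by
      rcases hiff with h | h
      · exact h
      · exact absurd (hmono h.2) h.1
    obtain ⟨⟨w, hw, hl⟩, hB⟩ := h1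
    have hew : e ∈ w.edges := by
      by_contra hew
      apply hB
      refine ⟨w.transfer _ ?_, hw.transfer _, by rw [SimpleGraph.Walk.length_transfer]; exact hl⟩
      intro g hg
      have hgs := w.edges_subset_edgeSet hg
      rw [SimpleGraph.edgeSet_fromEdgeSet] at hgs ⊢
      refine ⟨?_, hgs.2⟩
      have : g ∈ insert e E' := by exact_mod_cast hgs.1
      have hge : g ≠ e := fun hh => hew (hh ▸ hg)
      simp only [coe_erase, Set.mem_diff, Set.mem_singleton_iff]
      exact ⟨by exact_mod_cast (mem_insert.mp this).resolve_left hge, hge⟩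
    refine ⟨w.transfer G ?_, hw.transfer _, by rw [SimpleGraph.Walk.length_transfer]; exact hl,
      by rw [SimpleGraph.Walk.edges_transfer]; exact hew⟩
    intro g hg
    have hgs := w.edges_subset_edgeSet hg
    rw [SimpleGraph.edgeSet_fromEdgeSet] at hgs
    have : g ∈ insert e E' := by exact_mod_cast hgs.1
    rcases mem_insert.mp this with h1 | h2
    · exact h1 ▸ he
    · exact SimpleGraph.mem_edgeFinset.mp (hE' h2)
  · rintro ⟨w, hw, hl, hew⟩ hIr
    set E' : Finset (Sym2 V) := w.edges.toFinset with hE'def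
    have hE' : E' ⊆ G.edgeFinset := by
      intro g hg
      rw [hE'def, List.mem_toFinset] at hg
      exact SimpleGraph.mem_edgeFinset.mpr (w.edges_subset_edgeSet hg)
    have hiff := hIr E' hE'
    have hins : PhiStruct s t d (insert e E') := by
      refine ⟨w.transfer _ ?_, hw.transfer _, by rw [SimpleGraph.Walk.length_transfer]; exact hl⟩
      intro g hg
      rw [SimpleGraph.edgeSet_fromEdgeSet]
      refine ⟨?_, ?_⟩
      · simp only [coe_insert, Set.mem_insert_iff]
        exact Or.inr (by rw [hE'def]; exact List.mem_toFinset.mpr hg)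
      · exact fun hd' => (G.not_isDiag_of_mem_edgeSet (w.edges_subset_edgeSet hg)) hd'
    have hers := hiff.mp hins
    obtain ⟨u, hu, _⟩ := hers
    have : (SimpleGraph.fromEdgeSet {f | f ∈ w.edges ∧ f ≠ e}).Reachable s t := by
      refine SimpleGraph.Reachable.mono ?_ ⟨u⟩
      apply SimpleGraph.fromEdgeSet_mono
      intro g hg
      simp only [coe_erase, Set.mem_diff, Set.mem_singleton_iff, hE'def, coe_insert] at hg
      obtain ⟨hg1, hg2⟩ := hg
      exact ⟨by simpa using hg1, hg2⟩
    exact path_minus_edge_disconnects w hw e hew this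
end
end

section
/- Let G=(V,E) be a finite simple graph, s,t ∈ V two distinct terminal nodes, d a positive integer, and e = {x,y} ∈ E an edge. Then e is relevant for the two-terminal diameter-constrained structure function φ_d if and only if there exist two vertex-disjoint simple paths P₁ and P₂ in G, where either P₁ goes from s to x and P₂ goes from y to t, or P₁ goes from s to y and P₂ goes from x to t, such that the total number of edges of P₁ and P₂ satisfies ℓ(P₁) + ℓ(P₂) ≤ d − 1 (so that P₁ together with the edge e and P₂ forms an s–t path with at most d edges). -/
open Classical Finset

noncomputable section

/-!
An edge `e` is relevant exactly when some `s`–`t` path `p` with at most `d` edges runs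
through it. If so, take `E'` to be the edge set of `p`: with `e` it carries `p`, and without
`e` it carries no `s`–`t` walk at all, since the two halves of `p` on either side of `e` are
vertex-disjoint, so a walk leaving the first half must use an edge outside `E'`. Conversely,
a set `E'` witnessing relevance carries a short path with `e` and none without it, so that
path uses `e`. Splitting a path at `e` gives the two disjoint paths and back.
-/

open SimpleGraph

namespace SimpleGraph.Walk

variable {V : Type*} {G : SimpleGraph V}

theorem exists_eq_append_cons_of_mem_edges {u v x y : V} (p : G.Walk u v)
    (he : s(x, y) ∈ p.edges) :
    ∃ (a b : V) (h : G.Adj a b) (P₁ : G.Walk u a) (P₂ : G.Walk b v),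
      s(a, b) = s(x, y) ∧ p = P₁.append (cons h P₂) := by
  induction p with
  | nil => simp at he
  | @cons u w v h q ih =>
    rw [edges_cons, List.mem_cons] at he
    rcases he with he | he
    · exact ⟨u, w, h, nil, q, he.symm, rfl⟩
    · obtain ⟨a, b, hab, P₁, P₂, hsym, rfl⟩ := ih he
      exact ⟨a, b, hab, cons h P₁, P₂, hsym, rfl⟩

theorem isPath_append_cons_iff {u a b v : V} (h : G.Adj a b) (P₁ : G.Walk u a)
    (P₂ : G.Walk b v) :
    (P₁.append (cons h P₂)).IsPath ↔
      P₁.IsPath ∧ P₂.IsPath ∧ ∀ w ∈ P₁.support, w ∉ P₂.support := by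
  simp only [isPath_def, support_append, support_cons, List.tail_cons, List.nodup_append]
  exact and_congr_right fun _ => and_congr_right fun _ =>
    ⟨fun h w hw₁ hw₂ => h w hw₁ w hw₂ rfl, fun h w hw₁ _ hw₂ hw => h w hw₁ (hw ▸ hw₂)⟩

/-- The first dart of `w` out of `P₁.support` lies on neither walk. -/
theorem exists_mem_edges_notMem_of_disjoint_support {a₁ b₁ a₂ b₂ u v : V}
    (P₁ : G.Walk a₁ b₁) (P₂ : G.Walk a₂ b₂) (hdisj : ∀ w ∈ P₁.support, w ∉ P₂.support)
    (w : G.Walk u v) (hu : u ∈ P₁.support) (hv : v ∈ P₂.support) :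
    ∃ e ∈ w.edges, e ∉ P₁.edges ∧ e ∉ P₂.edges := by
  obtain ⟨dt, hdt, hfst, hsnd⟩ := w.exists_boundary_dart {w | w ∈ P₁.support} hu (hdisj v · hv)
  refine ⟨dt.edge, List.mem_map_of_mem hdt, fun h₁ => hsnd ?_, fun h₂ => hdisj _ hfst ?_⟩
  · exact P₁.snd_mem_support_of_mem_edges h₁
  · exact P₂.fst_mem_support_of_mem_edges h₂

end SimpleGraph.Walk

section

variable {V : Type*}

theorem phiStruct_iff_exists_path {G : SimpleGraph V} {E' : Finset (Sym2 V)}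
    (hE' : (↑E' : Set (Sym2 V)) ⊆ G.edgeSet) (s t : V) (d : ℕ) :
    PhiStruct s t d E' ↔
      ∃ p : G.Walk s t, p.IsPath ∧ p.length ≤ d ∧ ∀ e ∈ p.edges, e ∈ E' := by
  constructor
  · rintro ⟨w, hw, hlen⟩
    have hedges (e) (he : e ∈ w.edges) : e ∈ E' := by
      have hw := w.edges_subset_edgeSet he
      rw [edgeSet_fromEdgeSet] at hw
      exact hw.1
    refine ⟨w.transfer G fun e he => hE' (hedges e he), hw.transfer _, by simpa using hlen,
      by simpa using hedges⟩
  · rintro ⟨p, hp, hlen, hedges⟩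
    have hsub (e) (he : e ∈ p.edges) : e ∈ (fromEdgeSet (↑E' : Set (Sym2 V))).edgeSet := by
      rw [edgeSet_fromEdgeSet]
      exact ⟨hedges e he, G.not_isDiag_of_mem_edgeSet (p.edges_subset_edgeSet he)⟩
    exact ⟨p.transfer _ hsub, hp.transfer hsub, by simpa using hlen⟩

variable [Fintype V] [DecidableEq V] {G : SimpleGraph V} [DecidableRel G.Adj]

theorem exists_path_mem_edges_of_not_irrelevant {s t : V} {d : ℕ} {e : Sym2 V}
    (he : e ∈ G.edgeSet) (hrel : ¬ Irrelevant G s t d e) :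
    ∃ p : G.Walk s t, p.IsPath ∧ p.length ≤ d ∧ e ∈ p.edges := by
  obtain ⟨E', hE', hnot⟩ : ∃ E' ⊆ G.edgeFinset,
      ¬ (PhiStruct s t d (insert e E') ↔ PhiStruct s t d (E'.erase e)) := by
    simpa [Irrelevant] using hrel
  have hE'G : (↑E' : Set (Sym2 V)) ⊆ G.edgeSet := by
    rw [← coe_edgeFinset]
    exact_mod_cast hE'
  have hinsG : (↑(insert e E') : Set (Sym2 V)) ⊆ G.edgeSet := by
    simpa using Set.insert_subset he hE'G
  have heraseG : (↑(E'.erase e) : Set (Sym2 V)) ⊆ G.edgeSet :=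
    (coe_subset.mpr (erase_subset e E')).trans hE'G
  rw [phiStruct_iff_exists_path hinsG, phiStruct_iff_exists_path heraseG] at hnot
  by_contra! hno
  refine hnot ⟨fun ⟨p, hp, hlen, hedges⟩ => ⟨p, hp, hlen, fun e' he' => ?_⟩,
    fun ⟨p, hp, hlen, hedges⟩ => ⟨p, hp, hlen, fun e' he' => ?_⟩⟩
  · have hne : e' ≠ e := fun h => hno p hp hlen (h ▸ he')
    exact mem_erase.mpr ⟨hne, (mem_insert.mp (hedges e' he')).resolve_left hne⟩
  · exact mem_insert_of_mem (mem_of_mem_erase (hedges e' he'))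

theorem not_irrelevant_of_disjoint_paths {s t a b : V} {d : ℕ} (hab : G.Adj a b)
    (P₁ : G.Walk s a) (P₂ : G.Walk b t) (h₁ : P₁.IsPath) (h₂ : P₂.IsPath)
    (hdisj : ∀ v ∈ P₁.support, v ∉ P₂.support) (hlen : P₁.length + P₂.length + 1 ≤ d) :
    ¬ Irrelevant G s t d s(a, b) := by
  intro hirr
  set E' := (P₁.edges ++ P₂.edges).toFinset
  have hE'G : (↑E' : Set (Sym2 V)) ⊆ G.edgeSet := by
    intro e he
    rw [mem_coe, List.mem_toFinset, List.mem_append] at he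
    exact he.elim (P₁.edges_subset_edgeSet ·) (P₂.edges_subset_edgeSet ·)
  have hinsG : (↑(insert s(a, b) E') : Set (Sym2 V)) ⊆ G.edgeSet := by
    simpa using Set.insert_subset (G.mem_edgeSet.mpr hab) hE'G
  have heraseG : (↑(E'.erase s(a, b)) : Set (Sym2 V)) ⊆ G.edgeSet :=
    (coe_subset.mpr (erase_subset _ E')).trans hE'G
  have hphi : PhiStruct s t d (insert s(a, b) E') := by
    refine (phiStruct_iff_exists_path hinsG s t d).mpr ⟨P₁.append (Walk.cons hab P₂),
      (Walk.isPath_append_cons_iff hab P₁ P₂).mpr ⟨h₁, h₂, hdisj⟩, ?_, fun e he => ?_⟩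
    · rw [Walk.length_append, Walk.length_cons]
      omega
    · simp only [Walk.edges_append, Walk.edges_cons, List.mem_append, List.mem_cons] at he
      simp only [E', mem_insert, List.mem_toFinset, List.mem_append]
      tauto
  obtain ⟨w, -, -, hw⟩ := (phiStruct_iff_exists_path heraseG s t d).mp
    ((hirr E' (by rwa [← coe_subset, coe_edgeFinset])).mp hphi)
  obtain ⟨e, he, he₁, he₂⟩ := P₁.exists_mem_edges_notMem_of_disjoint_support P₂ hdisj w
    P₁.start_mem_support P₂.end_mem_support
  simpa [E', he₁, he₂] using mem_of_mem_erase (hw e he)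

end

theorem relevant_iff_two_disjoint_paths_general
    {V : Type*} [Fintype V] [DecidableEq V] (G : SimpleGraph V) [DecidableRel G.Adj]
    (s t : V) (d : ℕ) (hd : 1 ≤ d) (x y : V) (hxy : G.Adj x y) :
    ¬ Irrelevant G s t d s(x, y) ↔
      ∃ (a b : V) (P₁ : G.Walk s a) (P₂ : G.Walk b t),
        ((a = x ∧ b = y) ∨ (a = y ∧ b = x)) ∧
        P₁.IsPath ∧ P₂.IsPath ∧
        (∀ v ∈ P₁.support, v ∉ P₂.support) ∧
        P₁.length + P₂.length ≤ d - 1 := by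
  constructor
  · intro hrel
    obtain ⟨p, hp, hlen, he⟩ := exists_path_mem_edges_of_not_irrelevant hxy hrel
    obtain ⟨a, b, hab, P₁, P₂, hsym, rfl⟩ := p.exists_eq_append_cons_of_mem_edges he
    obtain ⟨h₁, h₂, hdisj⟩ := (Walk.isPath_append_cons_iff hab P₁ P₂).mp hp
    rw [Walk.length_append, Walk.length_cons] at hlen
    exact ⟨a, b, P₁, P₂, Sym2.eq_iff.mp hsym, h₁, h₂, hdisj, by omega⟩
  · rintro ⟨a, b, P₁, P₂, hends, h₁, h₂, hdisj, hlen⟩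
    have hsym : s(a, b) = s(x, y) := Sym2.eq_iff.mpr hends
    have hab : G.Adj a b := G.mem_edgeSet.mp (hsym ▸ hxy)
    exact hsym ▸ not_irrelevant_of_disjoint_paths hab P₁ P₂ h₁ h₂ hdisj (by omega)

/-- an edge `e = {x,y}` is relevant for `φ_d` iff there are two
vertex-disjoint simple paths, one from `s` to one endpoint of `e` and one from the
other endpoint of `e` to `t`, with total length at most `d - 1`. -/
theorem relevant_iff_two_disjoint_paths
    {V : Type*} [Fintype V] [DecidableEq V] (G : SimpleGraph V) [DecidableRel G.Adj]
    (s t : V) (hst : s ≠ t) (d : ℕ) (hd : 1 ≤ d) (x y : V) (hxy : G.Adj x y) :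
    ¬ Irrelevant G s t d s(x, y) ↔
      ∃ (a b : V) (P₁ : G.Walk s a) (P₂ : G.Walk b t),
        ((a = x ∧ b = y) ∨ (a = y ∧ b = x)) ∧
        P₁.IsPath ∧ P₂.IsPath ∧
        (∀ v ∈ P₁.support, v ∉ P₂.support) ∧
        P₁.length + P₂.length ≤ d - 1 :=
  relevant_iff_two_disjoint_paths_general G s t d hd x y hxy
end
end

section
/- Let G=(V,E) be a finite simple graph, s,t ∈ V two distinct terminal nodes, d a positive integer, and e = {x,y} ∈ E an edge. If d_G(s,x) + d_G(y,t) ≥ d and d_G(s,y) + d_G(x,t) ≥ d, then e is irrelevant for the two-terminal diameter-constrained structure function φ_d. -/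
open Classical Finset

noncomputable section

lemma key_edist {V : Type*} {G : SimpleGraph V} (x y t : V) :
    ∀ {u : V} (w : G.Walk u t), s(x,y) ∈ w.edges →
      (G.edist u x + 1 + G.edist y t ≤ w.length) ∨
      (G.edist u y + 1 + G.edist x t ≤ w.length) := by
  intro u w
  induction w with
  | nil => simp
  | @cons u v t hadj p ih =>
    intro hmem
    rw [SimpleGraph.Walk.edges_cons, List.mem_cons] at hmem
    rcases hmem with heq | hmem
    · rw [Sym2.eq_iff] at heq
      rcases heq with ⟨hx, hy⟩ | ⟨hy, hx⟩
      · left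
        subst hx; subst hy
        rw [SimpleGraph.edist_self]
        simpa [add_comm] using add_le_add_right (p.edist_le) 1
      · right
        subst hx; subst hy
        rw [SimpleGraph.edist_self]
        simpa [add_comm] using add_le_add_right (p.edist_le) 1
    · have hu : ∀ z : V, G.edist u z ≤ 1 + G.edist v z := by
        intro z
        calc G.edist u z ≤ G.edist u v + G.edist v z := SimpleGraph.edist_triangle
        _ ≤ 1 + G.edist v z := by
            gcongr
            simpa using hadj.toWalk.edist_le
      rcases ih hmem with h | h
      · left
        calc G.edist u x + 1 + G.edist y t
            ≤ (1 + G.edist v x) + 1 + G.edist y t := by gcongr; exact hu x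
          _ = (G.edist v x + 1 + G.edist y t) + 1 := by ring
          _ ≤ (p.length : ℕ∞) + 1 := by gcongr
          _ = ((p.cons hadj).length : ℕ∞) := by push_cast [SimpleGraph.Walk.length_cons]; ring
      · right
        calc G.edist u y + 1 + G.edist x t
            ≤ (1 + G.edist v y) + 1 + G.edist x t := by gcongr; exact hu y
          _ = (G.edist v y + 1 + G.edist x t) + 1 := by ring
          _ ≤ (p.length : ℕ∞) + 1 := by gcongr
          _ = ((p.cons hadj).length : ℕ∞) := by push_cast [SimpleGraph.Walk.length_cons]; ring

/-- if `d_G(s,x) + d_G(y,t) ≥ d` and `d_G(s,y) + d_G(x,t) ≥ d`, then the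
edge `e = {x,y}` is irrelevant for `φ_d`. -/
theorem irrelevant_of_distance_condition_one
    {V : Type*} [Fintype V] [DecidableEq V] (G : SimpleGraph V) [DecidableRel G.Adj]
    (s t : V) (hst : s ≠ t) (d : ℕ) (hd : 1 ≤ d) (x y : V) (hxy : G.Adj x y)
    (h1 : (d : ℕ∞) ≤ G.edist s x + G.edist y t)
    (h2 : (d : ℕ∞) ≤ G.edist s y + G.edist x t) :
    Irrelevant G s t d s(x, y) := by
  intro E' hE'
  constructor
  · rintro ⟨w, hp, hlen⟩
    -- the walk cannot use edge s(x,y)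
    have hle : SimpleGraph.fromEdgeSet (↑(insert s(x,y) E') : Set (Sym2 V)) ≤ G := by
      rw [← SimpleGraph.fromEdgeSet_edgeSet G]
      apply SimpleGraph.fromEdgeSet_mono
      intro f hf
      simp only [Finset.coe_insert, Set.mem_insert_iff] at hf
      rcases hf with rfl | hf
      · exact hxy
      · exact (SimpleGraph.mem_edgeFinset).1 (hE' hf)
    have hnot : s(x,y) ∉ w.edges := by
      intro hmem
      have hkey := key_edist x y t w hmem
      have hed : ∀ a b : V, G.edist a b ≤
          (SimpleGraph.fromEdgeSet (↑(insert s(x,y) E') : Set (Sym2 V))).edist a b :=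
        fun a b => SimpleGraph.edist_anti hle
      have hlen' : (w.length : ℕ∞) ≤ (d : ℕ∞) := by exact_mod_cast hlen
      have hcon : (d : ℕ∞) + 1 ≤ (d : ℕ∞) := by
        rcases hkey with h | h
        · calc (d : ℕ∞) + 1 ≤ (G.edist s x + G.edist y t) + 1 := by gcongr
            _ ≤ ((SimpleGraph.fromEdgeSet (↑(insert s(x,y) E') : Set (Sym2 V))).edist s x + (SimpleGraph.fromEdgeSet (↑(insert s(x,y) E') : Set (Sym2 V))).edist y t) + 1 := by gcongr <;> apply hed
            _ = (SimpleGraph.fromEdgeSet (↑(insert s(x,y) E') : Set (Sym2 V))).edist s x + 1 + (SimpleGraph.fromEdgeSet (↑(insert s(x,y) E') : Set (Sym2 V))).edist y t := by ring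
            _ ≤ (w.length : ℕ∞) := h
            _ ≤ (d : ℕ∞) := hlen'
        · calc (d : ℕ∞) + 1 ≤ (G.edist s y + G.edist x t) + 1 := by gcongr
            _ ≤ ((SimpleGraph.fromEdgeSet (↑(insert s(x,y) E') : Set (Sym2 V))).edist s y + (SimpleGraph.fromEdgeSet (↑(insert s(x,y) E') : Set (Sym2 V))).edist x t) + 1 := by gcongr <;> apply hed
            _ = (SimpleGraph.fromEdgeSet (↑(insert s(x,y) E') : Set (Sym2 V))).edist s y + 1 + (SimpleGraph.fromEdgeSet (↑(insert s(x,y) E') : Set (Sym2 V))).edist x t := by ring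
            _ ≤ (w.length : ℕ∞) := h
            _ ≤ (d : ℕ∞) := hlen'
      exact absurd ((ENat.add_one_le_iff (by simp)).mp hcon) (lt_irrefl _)
    refine ⟨w.transfer _ ?_, hp.transfer _, by rwa [SimpleGraph.Walk.length_transfer]⟩
    intro f hf
    have hfe := w.edges_subset_edgeSet hf
    rw [SimpleGraph.edgeSet_fromEdgeSet] at hfe ⊢
    refine ⟨?_, hfe.2⟩
    have h1' := hfe.1
    simp only [Finset.coe_insert, Set.mem_insert_iff] at h1'
    have hne : f ≠ s(x,y) := fun hq => hnot (hq ▸ hf)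
    rcases h1' with rfl | h1'
    · exact absurd rfl hne
    · simp [Finset.mem_erase, hne, h1']
  · rintro ⟨w, hp, hlen⟩
    refine ⟨w.transfer _ ?_, hp.transfer _, by rwa [SimpleGraph.Walk.length_transfer]⟩
    intro f hf
    have := w.edges_subset_edgeSet hf
    rw [SimpleGraph.edgeSet_fromEdgeSet] at this ⊢
    refine ⟨?_, this.2⟩
    have := this.1
    simp only [Finset.coe_erase, Set.mem_diff, Set.mem_singleton_iff] at this
    simp [Finset.mem_insert, this.1]
end
end

section
/- Let G=(V,E) be a finite simple graph, s,t ∈ V two distinct terminal nodes, d a positive integer, and e = {x,y} ∈ E an edge. If d_{G−e}(s,x) + d_{G−e}(y,t) ≥ d and d_{G−e}(s,y) + d_{G−e}(x,t) ≥ d, where G−e = (V, E \ {e}) denotes the graph with the edge e deleted, then e is irrelevant for the two-terminal diameter-constrained structure function φ_d. -/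
open Classical Finset

noncomputable section

/-- Key lemma: given a walk in `H'`, where every edge of `H'` other than `s(x,y)`
is an edge of `H`, either the endpoints are close in `H`, or the walk essentially
goes through the edge `s(x,y)`. -/
lemma walk_edist_cases {V : Type*} {H' H : SimpleGraph V} {x y : V}
    (hH : ∀ a b : V, H'.Adj a b → s(a, b) ≠ s(x, y) → H.Adj a b) :
    ∀ {u v : V} (w : H'.Walk u v),
      H.edist u v ≤ w.length ∨
      H.edist u x + 1 + H.edist y v ≤ w.length ∨
      H.edist u y + 1 + H.edist x v ≤ w.length := by
  intro u v w
  induction w with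
  | nil => left; simp [SimpleGraph.edist_self]
  | @cons u b v h p ih =>
    have hlen : ((SimpleGraph.Walk.cons h p).length : ℕ∞) = 1 + p.length := by
      simp [SimpleGraph.Walk.length_cons, add_comm]
    rw [hlen]
    by_cases he : s(u, b) = s(x, y)
    · rw [Sym2.eq_iff] at he
      rcases he with ⟨hux, hby⟩ | ⟨huy, hbx⟩
      · obtain ⟨n, hn⟩ : ∃ n : ℕ, p.length = n := ⟨_, rfl⟩
        rw [hn] at ih ⊢
        rw [hux]
        rw [hby] at ih
        rcases ih with h1 | h2 | h3
        · right; left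
          have : H.edist x x + 1 + H.edist y v = 1 + H.edist y v := by
            simp [SimpleGraph.edist_self]
          rw [this]; gcongr
        · right; left
          have h2' : H.edist y v ≤ (n : ℕ∞) := le_trans le_add_self h2
          have : H.edist x x + 1 + H.edist y v = 1 + H.edist y v := by
            simp [SimpleGraph.edist_self]
          rw [this]; gcongr
        · left
          have h3' : 1 + H.edist x v ≤ (n : ℕ∞) := by
            simpa [SimpleGraph.edist_self] using h3
          exact le_trans (le_trans le_add_self h3') le_add_self
      · obtain ⟨n, hn⟩ : ∃ n : ℕ, p.length = n := ⟨_, rfl⟩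
        rw [hn] at ih ⊢
        rw [huy]
        rw [hbx] at ih
        rcases ih with h1 | h2 | h3
        · right; right
          have : H.edist y y + 1 + H.edist x v = 1 + H.edist x v := by
            simp [SimpleGraph.edist_self]
          rw [this]; gcongr
        · left
          have h2' : 1 + H.edist y v ≤ (n : ℕ∞) := by
            simpa [SimpleGraph.edist_self] using h2
          exact le_trans (le_trans le_add_self h2') le_add_self
        · right; right
          have h3' : H.edist x v ≤ (n : ℕ∞) := le_trans le_add_self h3
          have : H.edist y y + 1 + H.edist x v = 1 + H.edist x v := by
            simp [SimpleGraph.edist_self]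
          rw [this]; gcongr
    · have hub : H.Adj u b := hH u b h he
      have hub1 : H.edist u b ≤ 1 := le_of_eq (SimpleGraph.edist_eq_one_iff_adj.mpr hub)
      rcases ih with h1 | h2 | h3
      · left
        calc H.edist u v ≤ H.edist u b + H.edist b v := SimpleGraph.edist_triangle
          _ ≤ 1 + (p.length : ℕ∞) := by gcongr
      · right; left
        calc H.edist u x + 1 + H.edist y v
            ≤ (H.edist u b + H.edist b x) + 1 + H.edist y v := by
              gcongr
              exact SimpleGraph.edist_triangle
          _ = H.edist u b + (H.edist b x + 1 + H.edist y v) := by ring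
          _ ≤ 1 + (p.length : ℕ∞) := by gcongr
      · right; right
        calc H.edist u y + 1 + H.edist x v
            ≤ (H.edist u b + H.edist b y) + 1 + H.edist x v := by
              gcongr
              exact SimpleGraph.edist_triangle
          _ = H.edist u b + (H.edist b y + 1 + H.edist x v) := by ring
          _ ≤ 1 + (p.length : ℕ∞) := by gcongr

/-- if `d_{G-e}(s,x) + d_{G-e}(y,t) ≥ d` and `d_{G-e}(s,y) + d_{G-e}(x,t) ≥ d`,
where `G - e` is the graph with the edge `e = {x,y}` deleted, then `e` is irrelevant
for `φ_d`. -/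
theorem irrelevant_of_distance_condition_two
    {V : Type*} [Fintype V] [DecidableEq V] (G : SimpleGraph V) [DecidableRel G.Adj]
    (s t : V) (hst : s ≠ t) (d : ℕ) (hd : 1 ≤ d) (x y : V) (hxy : G.Adj x y)
    (h1 : (d : ℕ∞) ≤ (G.deleteEdges {s(x, y)}).edist s x + (G.deleteEdges {s(x, y)}).edist y t)
    (h2 : (d : ℕ∞) ≤ (G.deleteEdges {s(x, y)}).edist s y + (G.deleteEdges {s(x, y)}).edist x t) :
    Irrelevant G s t d s(x, y) := by
  intro E' hE'
  set e : Sym2 V := s(x, y) with he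
  set H' : SimpleGraph V := SimpleGraph.fromEdgeSet (↑(insert e E') : Set (Sym2 V)) with hH'def
  set H : SimpleGraph V := SimpleGraph.fromEdgeSet (↑(E'.erase e) : Set (Sym2 V)) with hHdef
  have hHle : H ≤ H' := by
    apply SimpleGraph.fromEdgeSet_mono
    intro f hf
    simp only [Finset.coe_erase, Set.mem_diff, Finset.mem_coe] at hf
    simp only [Finset.coe_insert, Set.mem_insert_iff, Finset.mem_coe]
    exact Or.inr hf.1
  have hHdel : H ≤ G.deleteEdges {e} := by
    intro a b hab
    rw [hHdef, SimpleGraph.fromEdgeSet_adj] at hab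
    obtain ⟨hmem, hne⟩ := hab
    rw [Finset.mem_coe, Finset.mem_erase] at hmem
    rw [SimpleGraph.deleteEdges_adj]
    refine ⟨?_, ?_⟩
    · have := hE' hmem.2
      rwa [SimpleGraph.mem_edgeFinset, SimpleGraph.mem_edgeSet] at this
    · simpa using hmem.1
  constructor
  · rintro ⟨w, hwp, hwl⟩
    have hH : ∀ a b : V, H'.Adj a b → s(a, b) ≠ s(x, y) → H.Adj a b := by
      intro a b hab hne
      rw [hH'def, SimpleGraph.fromEdgeSet_adj] at hab
      obtain ⟨hmem, hne'⟩ := hab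
      rw [Finset.mem_coe, Finset.mem_insert] at hmem
      rw [hHdef, SimpleGraph.fromEdgeSet_adj]
      refine ⟨?_, hne'⟩
      rw [Finset.mem_coe, Finset.mem_erase]
      exact ⟨hne, hmem.resolve_left hne⟩
    have hdne : ((d : ℕ∞)) ≠ ⊤ := ENat.coe_ne_top d
    have hwl' : (w.length : ℕ∞) ≤ (d : ℕ∞) := by exact_mod_cast hwl
    rcases walk_edist_cases hH w with hc | hc | hc
    · -- there is a short walk in H
      have hle : H.edist s t ≤ (d : ℕ∞) := le_trans hc hwl'
      have hne : H.edist s t ≠ ⊤ := fun h => by rw [h] at hle; exact hdne (top_le_iff.mp hle)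
      obtain ⟨p, hp⟩ := SimpleGraph.exists_walk_of_edist_ne_top hne
      refine ⟨p.bypass, SimpleGraph.Walk.bypass_isPath p, ?_⟩
      have h1 : (p.bypass.length : ℕ∞) ≤ (p.length : ℕ∞) := by
        exact_mod_cast SimpleGraph.Walk.length_bypass_le p
      have : (p.bypass.length : ℕ∞) ≤ (d : ℕ∞) := le_trans h1 (by rw [hp]; exact hle)
      exact_mod_cast this
    · exfalso
      have key : (G.deleteEdges {e}).edist s x + 1 + (G.deleteEdges {e}).edist y t ≤ (d : ℕ∞) := by
        refine le_trans ?_ (le_trans hc hwl')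
        gcongr <;> exact SimpleGraph.edist_anti hHdel
      have : (d : ℕ∞) + 1 ≤ (d : ℕ∞) := by
        calc (d : ℕ∞) + 1 ≤ ((G.deleteEdges {e}).edist s x + (G.deleteEdges {e}).edist y t) + 1 := by
              gcongr
          _ = (G.deleteEdges {e}).edist s x + 1 + (G.deleteEdges {e}).edist y t := by ring
          _ ≤ (d : ℕ∞) := key
      have hlt : (d : ℕ∞) < (d : ℕ∞) + 1 := (ENat.lt_add_one_iff hdne).mpr le_rfl
      exact absurd (lt_of_lt_of_le hlt this) (lt_irrefl _)
    · exfalso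
      have key : (G.deleteEdges {e}).edist s y + 1 + (G.deleteEdges {e}).edist x t ≤ (d : ℕ∞) := by
        refine le_trans ?_ (le_trans hc hwl')
        gcongr <;> exact SimpleGraph.edist_anti hHdel
      have : (d : ℕ∞) + 1 ≤ (d : ℕ∞) := by
        calc (d : ℕ∞) + 1 ≤ ((G.deleteEdges {e}).edist s y + (G.deleteEdges {e}).edist x t) + 1 := by
              gcongr
          _ = (G.deleteEdges {e}).edist s y + 1 + (G.deleteEdges {e}).edist x t := by ring
          _ ≤ (d : ℕ∞) := key
      have hlt : (d : ℕ∞) < (d : ℕ∞) + 1 := (ENat.lt_add_one_iff hdne).mpr le_rfl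
      exact absurd (lt_of_lt_of_le hlt this) (lt_irrefl _)
  · rintro ⟨w, hwp, hwl⟩
    have hsub : ∀ f ∈ w.edges, f ∈ H'.edgeSet := by
      intro f hf
      exact SimpleGraph.edgeSet_mono hHle (w.edges_subset_edgeSet hf)
    refine ⟨w.transfer H' hsub, hwp.transfer hsub, ?_⟩
    rw [SimpleGraph.Walk.length_transfer]
    exact hwl
end
end

section
/- Let G=(V,E) be a finite simple graph, s,t ∈ V two distinct terminal nodes, d a positive integer, and e = {x,y} ∈ E an edge with x,y,s,t pairwise distinct. If d_{G−y−t}(s,x) + d_{G−s−x}(y,t) ≥ d and d_{G−x−t}(s,y) + d_{G−s−y}(x,t) ≥ d, where G−u−v denotes the graph obtained from G by deleting the vertices u and v (together with all incident edges), then e is irrelevant for the two-terminal diameter-constrained structure function φ_d. -/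
/-!
An `s`–`t` path in `E' ∪ {e}` that traverses `e = {x, y}`, say from `x` to `y`, splits at `e`
into an `s`–`x` path and a `y`–`t` path with disjoint vertex sets. The first avoids `y` and `t`,
the second avoids `s` and `x`, and neither uses `e`, so both live in the corresponding
vertex-deleted subgraphs of `G`, and the path has length at least
`d_{G-y-t}(s,x) + 1 + d_{G-s-x}(y,t) > d`. Hence every path witnessing `φ_d(E' ∪ {e})`
avoids `e` and witnesses `φ_d(E' \ {e})`; the converse is monotonicity of `φ_d`.
-/

open Classical Finset

noncomputable section

/-- The graph obtained from `G` by deleting the vertices in `S` (with all incident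
edges); it is kept on the same vertex type, the deleted vertices becoming isolated. -/
def deleteVerts {V : Type*} (G : SimpleGraph V) (S : Set V) : SimpleGraph V where
  Adj a b := G.Adj a b ∧ a ∉ S ∧ b ∉ S
  symm := ⟨fun _ _ h => ⟨h.1.symm, h.2.2, h.2.1⟩⟩
  loopless := ⟨fun a h => G.loopless.irrefl a h.1⟩

namespace SimpleGraph

variable {V : Type*} {u v : V}

theorem Walk.mem_of_mem_edges_fromEdgeSet {S : Set (Sym2 V)} (w : (fromEdgeSet S).Walk u v)
    {f : Sym2 V} (hf : f ∈ w.edges) : f ∈ S :=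
  (edgeSet_fromEdgeSet S ▸ w.edges_subset_edgeSet hf).1

theorem Walk.edist_deleteVerts_le {H : SimpleGraph V} (G : SimpleGraph V) {S : Set V}
    (w : H.Walk u v) (hG : ∀ f ∈ w.edges, f ∈ G.edgeSet) (hS : ∀ a ∈ w.support, a ∉ S) :
    (deleteVerts G S).edist u v ≤ w.length := by
  have hedges : ∀ f ∈ w.edges, f ∈ (deleteVerts G S).edgeSet := by
    intro f hf
    induction f using Sym2.ind with
    | _ a b =>
      exact ⟨hG _ hf, hS a (w.fst_mem_support_of_mem_edges hf),
        hS b (w.snd_mem_support_of_mem_edges hf)⟩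
  simpa using edist_le (w.transfer _ hedges)

theorem Walk.IsPath.edist_add_edist_lt_length {G H : SimpleGraph V} {s t x y : V}
    {w : H.Walk s t} (hw : w.IsPath) {hxy : H.Adj x y} (hsub : hxy.toWalk.IsSubwalk w)
    (hG : ∀ f ∈ w.edges, f ≠ s(x, y) → f ∈ G.edgeSet) :
    (deleteVerts G {y, t}).edist s x + (deleteVerts G {s, x}).edist y t < w.length := by
  obtain ⟨p, q, rfl⟩ := hsub
  have hsplit : (p.append hxy.toWalk).append q = p.append (cons hxy q) := by
    rw [← Walk.append_assoc]; rfl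
  rw [hsplit] at hw hG ⊢
  have hdisj : p.support.Disjoint q.support := by
    simpa using hw.disjoint_support_of_append (by simp)
  have hy : y ∉ p.support := fun h => hdisj h q.start_mem_support
  have hx : x ∉ q.support := fun h => hdisj p.end_mem_support h
  have hGp : ∀ f ∈ p.edges, f ∈ G.edgeSet := fun f hf =>
    hG f (by simp [hf]) fun h => hy (p.snd_mem_support_of_mem_edges (h ▸ hf))
  have hGq : ∀ f ∈ q.edges, f ∈ G.edgeSet := fun f hf =>
    hG f (by simp [hf]) fun h => hx (q.fst_mem_support_of_mem_edges (h ▸ hf))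
  have hp := p.edist_deleteVerts_le G hGp (S := {y, t}) fun a ha h => by
    rcases h with rfl | rfl
    exacts [hy ha, hdisj ha q.end_mem_support]
  have hq := q.edist_deleteVerts_le G hGq (S := {s, x}) fun a ha h => by
    rcases h with rfl | rfl
    exacts [hdisj p.start_mem_support ha, hx ha]
  calc _ ≤ (p.length + q.length : ℕ∞) := add_le_add hp hq
    _ < _ := by simp only [length_append, length_cons]; norm_cast; omega

end SimpleGraph

open SimpleGraph

theorem phiStruct_of_edges_mem {V : Type*} {s t : V} {d : ℕ} {F E' : Finset (Sym2 V)}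
    (w : (fromEdgeSet (↑F : Set (Sym2 V))).Walk s t) (hw : w.IsPath) (hl : w.length ≤ d)
    (hE' : ∀ f ∈ w.edges, f ∈ E') : PhiStruct s t d E' := by
  refine ⟨w.transfer _ fun f hf => ?_, hw.transfer _, by simpa using hl⟩
  rw [edgeSet_fromEdgeSet]
  exact ⟨hE' f hf, (edgeSet_fromEdgeSet _ ▸ w.edges_subset_edgeSet hf).2⟩

theorem PhiStruct.mono {V : Type*} {s t : V} {d : ℕ} {E₁ E₂ : Finset (Sym2 V)}
    (h : PhiStruct s t d E₁) (hE : E₁ ⊆ E₂) : PhiStruct s t d E₂ := by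
  obtain ⟨w, hw, hl⟩ := h
  exact phiStruct_of_edges_mem w hw hl fun f hf => hE (w.mem_of_mem_edges_fromEdgeSet hf)

theorem irrelevant_of_distance_condition_three_general
    {V : Type*} [Fintype V] [DecidableEq V] (G : SimpleGraph V) [DecidableRel G.Adj]
    (s t : V) (d : ℕ) (x y : V)
    (h1 : (d : ℕ∞) ≤ (deleteVerts G {y, t}).edist s x + (deleteVerts G {s, x}).edist y t)
    (h2 : (d : ℕ∞) ≤ (deleteVerts G {x, t}).edist s y + (deleteVerts G {s, y}).edist x t) :
    Irrelevant G s t d s(x, y) := by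
  intro E' hE'
  refine ⟨fun ⟨w, hw, hl⟩ => ?_, fun h => h.mono ((erase_subset _ _).trans (subset_insert _ _))⟩
  have hG : ∀ f ∈ w.edges, f ≠ s(x, y) → f ∈ G.edgeSet := fun f hf hne => by
    have hf' := mem_insert.mp (w.mem_of_mem_edges_fromEdgeSet hf)
    simpa using hE' (hf'.resolve_left hne)
  have he_notMem : s(x, y) ∉ w.edges := by
    intro he
    have hl' : (w.length : ℕ∞) ≤ d := by exact_mod_cast hl
    rcases (Walk.isSubwalk_toWalk_iff_mem_edges (w.adj_of_mem_edges he)).mpr he with hsub | hsub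
    · exact (h1.trans_lt (hw.edist_add_edist_lt_length hsub hG)).not_ge hl'
    · refine (h2.trans_lt (hw.edist_add_edist_lt_length hsub fun f hf hne => ?_)).not_ge hl'
      exact hG f hf (Sym2.eq_swap ▸ hne)
  refine phiStruct_of_edges_mem w hw hl fun f hf => ?_
  have hne : f ≠ s(x, y) := by rintro rfl; exact he_notMem hf
  exact mem_erase.mpr ⟨hne, (mem_insert.mp (w.mem_of_mem_edges_fromEdgeSet hf)).resolve_left hne⟩

/-- if `x, y, s, t` are pairwise distinct,
`d_{G-y-t}(s,x) + d_{G-s-x}(y,t) ≥ d` and `d_{G-x-t}(s,y) + d_{G-s-y}(x,t) ≥ d`,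
then the edge `e = {x,y}` is irrelevant for `φ_d`. -/
theorem irrelevant_of_distance_condition_three
    {V : Type*} [Fintype V] [DecidableEq V] (G : SimpleGraph V) [DecidableRel G.Adj]
    (s t : V) (hst : s ≠ t) (d : ℕ) (hd : 1 ≤ d) (x y : V) (hxy : G.Adj x y)
    (hxs : x ≠ s) (hxt : x ≠ t) (hys : y ≠ s) (hyt : y ≠ t)
    (h1 : (d : ℕ∞) ≤ (deleteVerts G {y, t}).edist s x + (deleteVerts G {s, x}).edist y t)
    (h2 : (d : ℕ∞) ≤ (deleteVerts G {x, t}).edist s y + (deleteVerts G {s, y}).edist x t) :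
    Irrelevant G s t d s(x, y) :=
  irrelevant_of_distance_condition_three_general G s t d x y h1 h2
end
end

section
/- Let G=(V,E) be a finite simple graph, s,t ∈ V two distinct terminal nodes, and e ∈ E an edge. If e is irrelevant for the two-terminal diameter-constrained structure function φ_d for some positive integer d, then e is irrelevant for φ_{d'} for every positive integer d' ≤ d. -/
open Classical Finset

noncomputable section

/-- Removing an edge of a simple path disconnects its endpoints within the
edges of the path: there is no walk between the endpoints using only the
remaining edges of the path. -/
lemma no_path_avoiding {V : Type*} {G H : SimpleGraph V} {s t : V}
    (w : G.Walk s t) : w.IsPath → ∀ e ∈ w.edges, ∀ q : H.Walk s t, q.IsPath →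
      (∀ f ∈ q.edges, f ∈ w.edges ∧ f ≠ e) → False := by
  induction w with
  | nil => intro _ e he; simp at he
  | @cons s b t hadj p ih =>
    intro hw e he q hq hsub
    rw [SimpleGraph.Walk.cons_isPath_iff] at hw
    have hst' : s ≠ t := fun h' => hw.2 (h' ▸ p.end_mem_support)
    cases q with
    | nil => exact hst' rfl
    | @cons _ c _ ha r =>
      obtain ⟨hfw, hfe⟩ := hsub s(s, c) (by simp)
      rw [SimpleGraph.Walk.edges_cons, List.mem_cons] at hfw
      rcases hfw with h1 | h2
      · have hcb : c = b := by
          rcases Sym2.eq_iff.mp h1 with ⟨_, h3⟩ | ⟨h3, _⟩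
          · exact h3
          · exact (hadj.ne h3).elim
        subst hcb
        rw [SimpleGraph.Walk.edges_cons, List.mem_cons] at he
        rcases he with hee | hep
        · exact hfe (h1.trans hee.symm).symm.symm
        · refine ih hw.1 e hep r hq.of_cons ?_
          intro f hf
          obtain ⟨hfw', hfe'⟩ := hsub f (by simp [hf])
          refine ⟨?_, hfe'⟩
          rw [SimpleGraph.Walk.edges_cons, List.mem_cons] at hfw'
          rcases hfw' with h1' | h2'
          · exfalso
            have hs : s ∈ r.support :=
              r.fst_mem_support_of_mem_edges (h1' ▸ hf)
            exact (SimpleGraph.Walk.cons_isPath_iff _ _).mp hq |>.2 hs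
          · exact h2'
      · exact hw.2 (p.fst_mem_support_of_mem_edges h2)

/-- if an edge `e` is irrelevant for `φ_d`, then it is irrelevant for
`φ_{d'}` for every positive integer `d' ≤ d`. -/
theorem irrelevant_mono
    {V : Type*} [Fintype V] [DecidableEq V] (G : SimpleGraph V) [DecidableRel G.Adj]
    (s t : V) (hst : s ≠ t) (d : ℕ) (hd : 1 ≤ d) (e : Sym2 V) (he : e ∈ G.edgeSet)
    (h : Irrelevant G s t d e) :
    ∀ d' : ℕ, 1 ≤ d' → d' ≤ d → Irrelevant G s t d' e := by
  intro d' _ hd'd E' hE'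
  constructor
  · rintro ⟨w, hw, hlen⟩
    have hwE : ∀ f ∈ w.edges, f ∈ (insert e E' : Finset (Sym2 V)) ∧ ¬ f.IsDiag := by
      intro f hf
      have hf' := w.edges_subset_edgeSet hf
      rw [SimpleGraph.edgeSet_fromEdgeSet] at hf'
      exact ⟨Finset.mem_coe.mp hf'.1, hf'.2⟩
    have hne : e ∉ w.edges := by
      intro hew
      set F : Finset (Sym2 V) := w.edges.toFinset.erase e with hF
      have hFG : F ⊆ G.edgeFinset := by
        intro f hf
        have hf' := Finset.mem_erase.mp hf
        have hfw : f ∈ w.edges := List.mem_toFinset.mp hf'.2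
        rcases Finset.mem_insert.mp (hwE f hfw).1 with rfl | hmem
        · exact SimpleGraph.mem_edgeFinset.mpr he
        · exact hE' hmem
      have hphi : PhiStruct s t d (insert e F) := by
        refine ⟨w.transfer _ ?_, hw.transfer _, ?_⟩
        · intro f hf
          rw [SimpleGraph.edgeSet_fromEdgeSet]
          refine ⟨?_, (hwE f hf).2⟩
          by_cases hfe : f = e
          · simp [hfe]
          · exact Finset.mem_coe.mpr (Finset.mem_insert_of_mem
              (Finset.mem_erase.mpr ⟨hfe, List.mem_toFinset.mpr hf⟩))
        · rw [SimpleGraph.Walk.length_transfer]; exact hlen.trans hd'd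
      have hFe : F.erase e = F := by rw [hF, Finset.erase_idem]
      have hphi' := (h F hFG).mp hphi
      rw [hFe] at hphi'
      obtain ⟨q, hq, _⟩ := hphi'
      refine no_path_avoiding w hw e hew q hq ?_
      intro f hf
      have hf' := q.edges_subset_edgeSet hf
      rw [SimpleGraph.edgeSet_fromEdgeSet] at hf'
      have hfF : f ∈ F := Finset.mem_coe.mp hf'.1
      have := Finset.mem_erase.mp hfF
      exact ⟨List.mem_toFinset.mp this.2, this.1⟩
    refine ⟨w.transfer _ ?_, hw.transfer _,
      by rw [SimpleGraph.Walk.length_transfer]; exact hlen⟩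
    intro f hf
    rw [SimpleGraph.edgeSet_fromEdgeSet]
    refine ⟨?_, (hwE f hf).2⟩
    have hfe : f ≠ e := fun h' => hne (h' ▸ hf)
    exact Finset.mem_coe.mpr (Finset.mem_erase.mpr
      ⟨hfe, Finset.mem_of_mem_insert_of_ne (hwE f hf).1 hfe⟩)
  · rintro ⟨q, hq, hlen⟩
    refine ⟨q.transfer _ ?_, hq.transfer _,
      by rw [SimpleGraph.Walk.length_transfer]; exact hlen⟩
    intro f hf
    have hf' := q.edges_subset_edgeSet hf
    rw [SimpleGraph.edgeSet_fromEdgeSet] at hf' ⊢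
    refine ⟨?_, hf'.2⟩
    exact Finset.mem_coe.mpr (Finset.mem_insert_of_mem
      (Finset.mem_of_mem_erase (Finset.mem_coe.mp hf'.1)))
end
end

section
/- Let G=(V,E) be a finite simple graph, s,t ∈ V two distinct terminal nodes, d ≥ 2 an integer, and p : E → [0,1] edge reliabilities. Suppose the source s has degree 1 in G, with unique incident edge e = {s,x} where x ≠ t. Then R^d_{{s,t},G}(p) = p(e) · R^{d−1}_{{x,t},G−s}(p|_{E\{e}}), where G−s is the graph obtained from G by deleting the vertex s (and its incident edge e), i.e., contracting the pending link replaces the source by x and decreases the diameter bound by one, at the multiplicative cost p(e). -/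
open Classical Finset

noncomputable section

/-- The two-terminal diameter-constrained reliability of the network whose edge set is
the finite set `E`, with terminals `s, t`, diameter `d` and elementary reliabilities `p`:
`R = Σ_{E' ⊆ E} (Π_{e ∈ E'} p e) (Π_{e ∈ E \ E'} (1 - p e)) φ_d(E')`. -/
def DCR {V : Type*} [DecidableEq V] (E : Finset (Sym2 V)) (s t : V) (d : ℕ)
    (p : Sym2 V → ℝ) : ℝ :=
  ∑ E' ∈ E.powerset,
    (∏ e ∈ E', p e) * (∏ e ∈ E \ E', (1 - p e)) * (if PhiStruct s t d E' then 1 else 0)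

/-- If no edge of `E'` contains `s`, there is no `s`–`t` walk at all (for `s ≠ t`). -/
lemma not_phi_of_no_s {V : Type*} {s t : V} (hst : s ≠ t) (d : ℕ) (E' : Finset (Sym2 V))
    (hE : ∀ e ∈ E', s ∉ e) : ¬ PhiStruct s t d E' := by
  rintro ⟨w, -, -⟩
  cases w with
  | nil => exact hst rfl
  | cons h w' =>
    rw [SimpleGraph.fromEdgeSet_adj] at h
    exact hE _ (Finset.mem_coe.mp h.1) (Sym2.mem_mk_left _ _)

/-- If no edge of `A` contains `s` and the walk starts away from `s`, the walk avoids `s`. -/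
lemma s_not_mem_support {V : Type*} {s : V} (A : Finset (Sym2 V)) (hA : ∀ e ∈ A, s ∉ e) :
    ∀ {a b : V} (w : (SimpleGraph.fromEdgeSet (↑A : Set (Sym2 V))).Walk a b),
      a ≠ s → s ∉ w.support := by
  intro a b w
  induction w with
  | nil =>
    intro ha h
    simp only [SimpleGraph.Walk.support_nil, List.mem_singleton] at h
    exact ha h.symm
  | @cons u c b h w ih =>
    intro hu hmem
    rw [SimpleGraph.fromEdgeSet_adj] at h
    have hc : c ≠ s := by
      intro hcs
      exact hA _ (Finset.mem_coe.mp h.1) (hcs ▸ Sym2.mem_mk_right u c)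
    rw [SimpleGraph.Walk.support_cons, List.mem_cons] at hmem
    rcases hmem with h' | h'
    · exact hu h'.symm
    · exact ih hc h'

/-- Key step: with a pending edge `{s,x}` at the source, a short `s`–`t` path exists
iff a one-shorter `x`–`t` path exists avoiding the pending edge. -/
lemma phi_insert_iff {V : Type*} [DecidableEq V] {s t x : V} (hst : s ≠ t) (hsx : s ≠ x)
    {d : ℕ} (hd : 1 ≤ d) (A : Finset (Sym2 V)) (hA : ∀ e ∈ A, s ∉ e) :
    PhiStruct s t d (insert s(s, x) A) ↔ PhiStruct x t (d - 1) A := by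
  constructor
  · rintro ⟨w, hw, hlen⟩
    cases w with
    | nil => exact absurd rfl hst
    | @cons _ c _ h w' =>
      have h' := h
      rw [SimpleGraph.fromEdgeSet_adj] at h'
      have hcx : c = x := by
        have hm : s(s, c) ∈ insert s(s, x) A := Finset.mem_coe.mp h'.1
        rcases Finset.mem_insert.mp hm with he | he
        · rcases Sym2.eq_iff.mp he with ⟨-, rfl⟩ | ⟨rfl, -⟩
          · rfl
          · exact absurd rfl hsx
        · exact absurd (Sym2.mem_mk_left _ _) (hA _ he)
      subst hcx
      rw [SimpleGraph.Walk.cons_isPath_iff] at hw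
      obtain ⟨hw', hs⟩ := hw
      have hcond : ∀ e ∈ w'.edges,
          e ∈ (SimpleGraph.fromEdgeSet (↑A : Set (Sym2 V))).edgeSet := by
        intro e he
        have h1 := w'.edges_subset_edgeSet he
        rw [SimpleGraph.edgeSet_fromEdgeSet, Set.mem_diff] at h1 ⊢
        refine ⟨?_, h1.2⟩
        rcases Finset.mem_insert.mp (Finset.mem_coe.mp h1.1) with rfl | hmem
        · exact absurd (w'.fst_mem_support_of_mem_edges he) hs
        · exact Finset.mem_coe.mpr hmem
      refine ⟨w'.transfer _ hcond, hw'.transfer hcond, ?_⟩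
      rw [SimpleGraph.Walk.length_transfer]
      have : w'.length + 1 ≤ d := by simpa using hlen
      omega
  · rintro ⟨w, hw, hlen⟩
    have hcond : ∀ e ∈ w.edges,
        e ∈ (SimpleGraph.fromEdgeSet (↑(insert s(s, x) A) : Set (Sym2 V))).edgeSet := by
      intro e he
      have h1 := w.edges_subset_edgeSet he
      rw [SimpleGraph.edgeSet_fromEdgeSet, Set.mem_diff] at h1 ⊢
      exact ⟨Finset.mem_coe.mpr (Finset.mem_insert_of_mem (Finset.mem_coe.mp h1.1)), h1.2⟩
    have hadj : (SimpleGraph.fromEdgeSet (↑(insert s(s, x) A) : Set (Sym2 V))).Adj s x := by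
      rw [SimpleGraph.fromEdgeSet_adj]
      exact ⟨Finset.mem_coe.mpr (Finset.mem_insert_self _ _), hsx⟩
    refine ⟨SimpleGraph.Walk.cons hadj (w.transfer _ hcond), ?_, ?_⟩
    · rw [SimpleGraph.Walk.cons_isPath_iff]
      refine ⟨hw.transfer hcond, ?_⟩
      rw [SimpleGraph.Walk.support_transfer]
      exact s_not_mem_support A hA w (Ne.symm hsx)
    · rw [SimpleGraph.Walk.length_cons, SimpleGraph.Walk.length_transfer]
      omega

/-- Pending-Node for the source: if the source `s` has degree 1, with
unique incident edge `e = {s,x}`, `x ≠ t` and `d ≥ 2`, then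
`R^d_{{s,t},G}(p) = p(e) · R^{d-1}_{{x,t},G-s}(p)`, where `G - s` has edge set the
edges of `G` not incident to `s`. -/
theorem dcr_pending_source
    {V : Type*} [Fintype V] [DecidableEq V] (G : SimpleGraph V) [DecidableRel G.Adj]
    (s t : V) (hst : s ≠ t) (d : ℕ) (hd : 2 ≤ d)
    (p : Sym2 V → ℝ) (hp : ∀ e ∈ G.edgeSet, 0 ≤ p e ∧ p e ≤ 1)
    (x : V) (hsx : G.Adj s x) (hxt : x ≠ t) (hdeg : G.degree s = 1) :
    DCR G.edgeFinset s t d p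
      = p s(s, x) * DCR (G.edgeFinset.filter (fun ed => s ∉ ed)) x t (d - 1) p := by
  classical
  have hsx' : s ≠ x := hsx.ne
  set e₀ : Sym2 V := s(s, x) with he₀
  set F : Finset (Sym2 V) := G.edgeFinset.filter (fun ed => s ∉ ed) with hFdef
  have he₀F : e₀ ∉ F := by
    simp [hFdef, he₀, Finset.mem_filter]
  -- every edge of `G` containing `s` is `e₀`
  have hnbr : G.neighborFinset s = {x} := by
    have hxmem : x ∈ G.neighborFinset s := by
      rw [SimpleGraph.mem_neighborFinset]; exact hsx
    have hcard : (G.neighborFinset s).card = 1 := by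
      rw [← SimpleGraph.card_neighborFinset_eq_degree] at hdeg; exact hdeg
    obtain ⟨a, ha⟩ := Finset.card_eq_one.mp hcard
    rw [ha] at hxmem ⊢
    rw [Finset.mem_singleton] at hxmem
    rw [hxmem]
  have h_unique : ∀ e ∈ G.edgeFinset, s ∈ e → e = e₀ := by
    intro e he hse
    obtain ⟨y, rfl⟩ := Sym2.mem_iff_exists.mp hse
    have hadj : G.Adj s y := (G.mem_edgeSet).mp (SimpleGraph.mem_edgeFinset.mp he)
    have hy : y ∈ G.neighborFinset s := by
      rw [SimpleGraph.mem_neighborFinset]; exact hadj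
    rw [hnbr, Finset.mem_singleton] at hy
    rw [hy]
  have hEdge : G.edgeFinset = insert e₀ F := by
    ext e
    simp only [Finset.mem_insert, hFdef, Finset.mem_filter]
    constructor
    · intro he
      by_cases hse : s ∈ e
      · exact Or.inl (h_unique e he hse)
      · exact Or.inr ⟨he, hse⟩
    · rintro (rfl | ⟨he, -⟩)
      · exact SimpleGraph.mem_edgeFinset.mpr ((G.mem_edgeSet).mpr hsx)
      · exact he
  have hvanish : ∀ A ∈ F.powerset,
      (∏ e ∈ A, p e) * (∏ e ∈ (insert e₀ F) \ A, (1 - p e)) *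
        (if PhiStruct s t d A then 1 else 0) = 0 := by
    intro A hA
    rw [Finset.mem_powerset] at hA
    rw [if_neg (not_phi_of_no_s hst d A
      (fun e he => (Finset.mem_filter.mp (hA he)).2)), mul_zero]
  have key : ∀ A ∈ F.powerset,
      (∏ e ∈ insert e₀ A, p e) * (∏ e ∈ (insert e₀ F) \ (insert e₀ A), (1 - p e)) *
        (if PhiStruct s t d (insert e₀ A) then 1 else 0)
      = p e₀ * ((∏ e ∈ A, p e) * (∏ e ∈ F \ A, (1 - p e)) *
        (if PhiStruct x t (d - 1) A then 1 else 0)) := by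
    intro A hA
    rw [Finset.mem_powerset] at hA
    have hAs : ∀ e ∈ A, s ∉ e := fun e he => (Finset.mem_filter.mp (hA he)).2
    have hAe : e₀ ∉ A := fun h => he₀F (hA h)
    have hsdiff : (insert e₀ F) \ (insert e₀ A) = F \ A := by
      ext e
      simp only [Finset.mem_sdiff, Finset.mem_insert, not_or]
      constructor
      · rintro ⟨rfl | he, hne, hnA⟩
        · exact absurd rfl hne
        · exact ⟨he, hnA⟩
      · rintro ⟨he, hnA⟩
        exact ⟨Or.inr he, fun h => he₀F (h ▸ he), hnA⟩
    have hphi : PhiStruct s t d (insert e₀ A) ↔ PhiStruct x t (d - 1) A :=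
      phi_insert_iff hst hsx' (by omega) A hAs
    rw [Finset.prod_insert hAe, hsdiff]
    simp only [hphi]
    ring
  rw [DCR, hEdge, Finset.sum_powerset_insert he₀F, Finset.sum_eq_zero hvanish, zero_add,
    Finset.sum_congr rfl key, ← Finset.mul_sum, DCR]
end
end

section
/- Let G=(V,E) be a finite simple graph, s,t ∈ V two distinct terminal nodes, d a positive integer, and p : E → [0,1] edge reliabilities. If v ∈ V is a non-terminal node (v ∉ {s,t}) of degree 1 in G, then R^d_{{s,t},G}(p) = R^d_{{s,t},G−v}(p|_{E'}), where G−v is the graph obtained from G by deleting v and its unique incident edge, and E' is the remaining edge set; that is, a non-terminal pending node may be deleted without changing the diameter-constrained reliability. -/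
open Classical Finset

noncomputable section

lemma walk_avoid {V : Type*} {H : SimpleGraph V} {v a : V}
    (huniq : ∀ z, H.Adj v z → z = a) :
    ∀ {x t : V} (w : H.Walk x t), w.IsPath → x ≠ v → t ≠ v → v ∉ w.support := by
  intro x t w
  induction w with
  | nil => intro _ hx _ h; simp at h; exact hx h.symm
  | @cons x y t h w ih =>
    intro hpath hx ht hmem
    rw [SimpleGraph.Walk.support_cons, List.mem_cons] at hmem
    rcases hmem with h1 | h2
    · exact hx h1.symm
    · by_cases hy : y = v
      · subst hy
        cases w with
        | nil => exact ht rfl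
        | @cons _ z _ h' w' =>
          have hz : z = a := huniq z h'
          have hxa : x = a := huniq x h.symm
          have hxs : x ∈ (SimpleGraph.Walk.cons h' w').support := by
            rw [SimpleGraph.Walk.support_cons]
            exact List.mem_cons_of_mem _ (by rw [hxa, ← hz]; exact w'.start_mem_support)
          exact ((SimpleGraph.Walk.cons_isPath_iff _ _).mp hpath).2 hxs
      · exact ih hpath.of_cons hy ht h2

lemma phi_insert_iff_s10 {V : Type*} [DecidableEq V] (G : SimpleGraph V)
    {s t v a : V} (hvs : v ≠ s) (hvt : v ≠ t)
    (huniq : ∀ z, G.Adj v z → z = a) (d : ℕ)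
    (E' : Finset (Sym2 V)) (hE' : (↑E' : Set (Sym2 V)) ⊆ G.edgeSet)
    (he : s(v,a) ∉ E') :
    PhiStruct s t d (insert s(v,a) E') ↔ PhiStruct s t d E' := by
  constructor
  · rintro ⟨w, hw, hl⟩
    have huniq' : ∀ z, (SimpleGraph.fromEdgeSet (↑(insert s(v,a) E') : Set (Sym2 V))).Adj v z → z = a := by
      intro z hz
      rw [SimpleGraph.fromEdgeSet_adj] at hz
      obtain ⟨hmem, hne⟩ := hz
      simp only [Finset.coe_insert, Set.mem_insert_iff, Finset.mem_coe] at hmem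
      rcases hmem with h1 | h2
      · exact (Sym2.congr_right.mp h1)
      · exact huniq z (hE' h2)
    have hvsup : v ∉ w.support := walk_avoid huniq' w hw (Ne.symm hvs) (Ne.symm hvt)
    have hne : s(v,a) ∉ w.edges := fun hmem =>
      hvsup (SimpleGraph.Walk.fst_mem_support_of_mem_edges w hmem)
    have hsub : ∀ e ∈ w.edges, e ∈ (SimpleGraph.fromEdgeSet (↑E' : Set (Sym2 V))).edgeSet := by
      intro e hmem
      have h1 := w.edges_subset_edgeSet hmem
      rw [SimpleGraph.edgeSet_fromEdgeSet] at h1 ⊢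
      obtain ⟨h2, h3⟩ := h1
      refine ⟨?_, h3⟩
      simp only [Finset.coe_insert, Set.mem_insert_iff, Finset.mem_coe] at h2
      rcases h2 with h4 | h4
      · exact absurd (h4 ▸ hmem) hne
      · exact h4
    exact ⟨w.transfer _ hsub, hw.transfer hsub, by rw [SimpleGraph.Walk.length_transfer]; exact hl⟩
  · rintro ⟨w, hw, hl⟩
    have hsub : ∀ e ∈ w.edges, e ∈ (SimpleGraph.fromEdgeSet (↑(insert s(v,a) E') : Set (Sym2 V))).edgeSet := by
      intro e hmem
      have h1 := w.edges_subset_edgeSet hmem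
      rw [SimpleGraph.edgeSet_fromEdgeSet] at h1 ⊢
      refine ⟨?_, h1.2⟩
      simp only [Finset.coe_insert, Set.mem_insert_iff, Finset.mem_coe]
      exact Or.inr h1.1
    exact ⟨w.transfer _ hsub, hw.transfer hsub, by rw [SimpleGraph.Walk.length_transfer]; exact hl⟩

/-- a non-terminal pending node `v` (degree 1, `v ∉ {s,t}`) may be
deleted together with its unique incident edge without changing the
diameter-constrained reliability. -/
theorem dcr_delete_pending_nonterminal
    {V : Type*} [Fintype V] [DecidableEq V] (G : SimpleGraph V) [DecidableRel G.Adj]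
    (s t : V) (hst : s ≠ t) (d : ℕ) (hd : 1 ≤ d)
    (p : Sym2 V → ℝ) (hp : ∀ e ∈ G.edgeSet, 0 ≤ p e ∧ p e ≤ 1)
    (v : V) (hvs : v ≠ s) (hvt : v ≠ t) (hdeg : G.degree v = 1) :
    DCR G.edgeFinset s t d p
      = DCR (G.edgeFinset.filter (fun ed => v ∉ ed)) s t d p := by
  obtain ⟨a, ha⟩ : ∃ a, G.neighborFinset v = {a} :=
    Finset.card_eq_one.mp (by rw [SimpleGraph.card_neighborFinset_eq_degree]; exact hdeg)
  have hadj : G.Adj v a := by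
    rw [← SimpleGraph.mem_neighborFinset, ha]; simp
  have huniq : ∀ z, G.Adj v z → z = a := by
    intro z hz
    have h := (SimpleGraph.mem_neighborFinset G v z).mpr hz
    rw [ha] at h; simpa using h
  set e₀ : Sym2 V := s(v, a) with he₀def
  set F : Finset (Sym2 V) := G.edgeFinset.filter (fun ed => v ∉ ed) with hFdef
  have huniqe : ∀ e ∈ G.edgeFinset, v ∈ e → e = e₀ := by
    intro e heG hv
    obtain ⟨z, rfl⟩ := Sym2.mem_iff_exists.mp hv
    have : G.Adj v z := (SimpleGraph.mem_edgeFinset.mp heG : _)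
    rw [huniq z this]
  have he₀G : e₀ ∈ G.edgeFinset := SimpleGraph.mem_edgeFinset.mpr hadj
  have he₀F : e₀ ∉ F :=
    fun h => (Finset.mem_filter.mp h).2 (Sym2.mem_mk_left v a)
  have hEF : G.edgeFinset = insert e₀ F := by
    ext e
    simp only [Finset.mem_insert, hFdef, Finset.mem_filter]
    constructor
    · intro h
      by_cases hv : v ∈ e
      · exact Or.inl (huniqe e h hv)
      · exact Or.inr ⟨h, hv⟩
    · rintro (rfl | ⟨h, _⟩)
      · exact he₀G
      · exact h
  have hFsub : (↑F : Set (Sym2 V)) ⊆ G.edgeSet := by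
    intro e he
    simp only [hFdef, Finset.coe_filter, Set.mem_setOf_eq] at he
    exact SimpleGraph.mem_edgeFinset.mp he.1
  rw [hEF]
  unfold DCR
  rw [Finset.sum_powerset_insert he₀F, ← Finset.sum_add_distrib]
  apply Finset.sum_congr rfl
  intro E' hE'
  rw [Finset.mem_powerset] at hE'
  have he₀E' : e₀ ∉ E' := fun h => he₀F (hE' h)
  have hsd1 : insert e₀ F \ E' = insert e₀ (F \ E') := Finset.insert_sdiff_of_notMem F he₀E'
  have hsd2 : insert e₀ F \ insert e₀ E' = F \ E' := by
    ext x
    simp only [Finset.mem_sdiff, Finset.mem_insert, not_or]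
    constructor
    · rintro ⟨rfl | hx, h1, h2⟩
      · exact absurd rfl h1
      · exact ⟨hx, h2⟩
    · rintro ⟨hx, h2⟩
      exact ⟨Or.inr hx, fun h => he₀F (h ▸ hx), h2⟩
  have he₀FE : e₀ ∉ F \ E' := fun h => he₀F (Finset.mem_sdiff.mp h).1
  have hiff : PhiStruct s t d (insert e₀ E') ↔ PhiStruct s t d E' :=
    phi_insert_iff_s10 G hvs hvt huniq d E'
      (Set.Subset.trans (Finset.coe_subset.mpr hE') hFsub) he₀E'
  have hif : (if PhiStruct s t d (insert e₀ E') then (1:ℝ) else 0)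
      = (if PhiStruct s t d E' then (1:ℝ) else 0) := if_congr hiff rfl rfl
  rw [hsd1, hsd2, Finset.prod_insert he₀FE, Finset.prod_insert he₀E', hif]
  ring
end
end

section
/- Let G=(V,E) be a finite simple graph, K ⊆ V a terminal set, d a positive integer, and p : E → [0,1] edge reliabilities. Suppose v ∈ V is a cut-node of G and C is a connected component of G−v (the graph with vertex v deleted) containing no terminal node (C ∩ K = ∅). Then R^d_{K,G}(p) = R^d_{K,G'}(p|_{E'}), where G' is the graph obtained from G by deleting all vertices of C (with their incident edges) and E' is the remaining edge set; that is, a terminal-free component hanging off a cut-node may be deleted without changing the diameter-constrained reliability. -/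
open Classical Finset

noncomputable section

/-- The `K`-terminal diameter-constrained structure function `φ_d`:
`PhiStructK K d E'` holds iff in the spanning subgraph `(V, E')` every pair of
distinct terminals of `K` is joined by a simple path with at most `d` edges. -/
def PhiStructK {V : Type*} (K : Set V) (d : ℕ) (E' : Finset (Sym2 V)) : Prop :=
  ∀ u ∈ K, ∀ v ∈ K, u ≠ v →
    ∃ w : (SimpleGraph.fromEdgeSet (↑E' : Set (Sym2 V))).Walk u v, w.IsPath ∧ w.length ≤ d

/-- The `K`-terminal diameter-constrained reliability of the network whose edge set is
the finite set `E`. -/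
def DCRK {V : Type*} [DecidableEq V] (E : Finset (Sym2 V)) (K : Set V) (d : ℕ)
    (p : Sym2 V → ℝ) : ℝ :=
  ∑ E' ∈ E.powerset,
    (∏ e ∈ E', p e) * (∏ e ∈ E \ E', (1 - p e)) * (if PhiStructK K d E' then 1 else 0)

/-- If every boundary crossing into `S` happens at `v`, a walk from inside `S`
to outside `S` must pass through `v`. -/
lemma aux_walk_cross {V : Type*} {H : SimpleGraph V} {S : Set V} {v : V}
    (hbd : ∀ a b : V, H.Adj a b → b ∈ S → a ∉ S → a = v) :
    ∀ {a b : V} (w : H.Walk a b), a ∈ S → b ∉ S → v ∈ w.support := by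
  intro a b w
  induction w with
  | nil => intro ha hb; exact absurd ha hb
  | cons h w ih =>
    rename_i x c y
    intro ha hb
    by_cases hc : c ∈ S
    · rw [SimpleGraph.Walk.support_cons, List.mem_cons]
      exact Or.inr (ih hc hb)
    · have hcv : c = v := hbd c x h.symm ha hc
      rw [SimpleGraph.Walk.support_cons, List.mem_cons]
      exact Or.inr (hcv ▸ w.start_mem_support)

/-- A simple path whose endpoints avoid `S` avoids `S` entirely, when the only
boundary vertex of `S` is `v`. -/
lemma aux_path_avoids {V : Type*} {H : SimpleGraph V} {S : Set V} {v : V}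
    (hbd : ∀ a b : V, H.Adj a b → b ∈ S → a ∉ S → a = v) :
    ∀ {a b : V} (w : H.Walk a b), w.IsPath → a ∉ S → b ∉ S →
      ∀ x ∈ w.support, x ∉ S := by
  intro a b w
  induction w with
  | nil =>
    intro _ ha _ x hx
    rw [SimpleGraph.Walk.support_nil, List.mem_singleton] at hx
    exact hx ▸ ha
  | cons h w ih =>
    rename_i u c y
    intro hw ha hb x hx
    by_cases hc : c ∈ S
    · exfalso
      have huv : u = v := hbd u c h hc ha
      have hv : v ∈ w.support := aux_walk_cross hbd w hc hb
      rw [SimpleGraph.Walk.cons_isPath_iff] at hw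
      exact hw.2 (huv ▸ hv)
    · rw [SimpleGraph.Walk.support_cons, List.mem_cons] at hx
      rcases hx with rfl | hx
      · exact ha
      · rw [SimpleGraph.Walk.cons_isPath_iff] at hw
        exact ih hw.1 hc hb x hx

/-- Perfect-Cut-Node, terminal-free side: if `v` is a cut-node of `G`
and `C` is a connected component of `G - v` containing no terminal, then deleting all
vertices of `C` (with their incident edges) leaves the `K`-terminal
diameter-constrained reliability unchanged. -/
theorem dcrK_delete_terminal_free_component
    {V : Type*} [Fintype V] [DecidableEq V] (G : SimpleGraph V) [DecidableRel G.Adj]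
    (K : Set V) (d : ℕ) (hd : 1 ≤ d)
    (p : Sym2 V → ℝ) (hp : ∀ e ∈ G.edgeSet, 0 ≤ p e ∧ p e ≤ 1)
    (v : V)
    (hcut : Nat.card (SimpleGraph.induce ({v}ᶜ : Set V) G).ConnectedComponent
              > Nat.card G.ConnectedComponent)
    (C : (SimpleGraph.induce ({v}ᶜ : Set V) G).ConnectedComponent)
    (hC : (Subtype.val '' C.supp) ∩ K = ∅) :
    DCRK G.edgeFinset K d p
      = DCRK (G.edgeFinset.filter (fun ed => ∀ w ∈ ed, w ∉ Subtype.val '' C.supp))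
          K d p := by
  classical
  set S : Set V := Subtype.val '' C.supp with hS
  set E : Finset (Sym2 V) := G.edgeFinset with hE
  set F : Finset (Sym2 V) := E.filter (fun ed => ∀ w ∈ ed, w ∉ S) with hF
  have hFE : F ⊆ E := filter_subset _ _
  -- the boundary property in G
  have hbdG : ∀ a b : V, G.Adj a b → b ∈ S → a ∉ S → a = v := by
    intro a b hab hb ha
    by_contra hav
    obtain ⟨b', hb', rfl⟩ := hb
    have hbv : (b'.val : V) ≠ v := b'.property
    have hadj : (SimpleGraph.induce ({v}ᶜ : Set V) G).Adj ⟨a, hav⟩ b' := by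
      simpa using hab
    have : (⟨a, hav⟩ : ({v}ᶜ : Set V)) ∈ C.supp := by
      have hb'' : (SimpleGraph.induce ({v}ᶜ : Set V) G).connectedComponentMk b' = C := hb'
      rw [SimpleGraph.ConnectedComponent.mem_supp_iff, ← hb'']
      exact SimpleGraph.ConnectedComponent.sound hadj.reachable
    exact ha ⟨⟨a, hav⟩, this, rfl⟩
  -- terminals avoid S
  have hKS : ∀ u ∈ K, u ∉ S := by
    intro u hu hus
    have : u ∈ S ∩ K := ⟨hus, hu⟩
    rw [hC] at this
    exact this
  -- φ depends only on the part inside F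
  have hphi : ∀ A ∈ F.powerset, ∀ B ∈ (E \ F).powerset,
      PhiStructK K d (A ∪ B) ↔ PhiStructK K d A := by
    intro A hA B hB
    rw [mem_powerset] at hA hB
    constructor
    · intro h u hu u' hu' hne
      obtain ⟨w, hwp, hwl⟩ := h u hu u' hu' hne
      have hbdH : ∀ a b : V,
          (SimpleGraph.fromEdgeSet (↑(A ∪ B) : Set (Sym2 V))).Adj a b →
          b ∈ S → a ∉ S → a = v := by
        intro a b hab hb ha
        rw [SimpleGraph.fromEdgeSet_adj] at hab
        have : s(a, b) ∈ E := by
          rcases Finset.mem_union.mp hab.1 with h' | h'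
          · exact hFE (hA h')
          · exact (Finset.mem_sdiff.mp (hB h')).1
        rw [hE, SimpleGraph.mem_edgeFinset, SimpleGraph.mem_edgeSet] at this
        exact hbdG a b this hb ha
      have havoid := aux_path_avoids hbdH w hwp (hKS u hu) (hKS u' hu')
      have hedges : ∀ e ∈ w.edges,
          e ∈ (SimpleGraph.fromEdgeSet (↑A : Set (Sym2 V))).edgeSet := by
        intro e he
        have h1 := w.edges_subset_edgeSet he
        rw [SimpleGraph.edgeSet_fromEdgeSet] at h1 ⊢
        refine ⟨?_, h1.2⟩
        have h2 : e ∈ A ∪ B := by exact_mod_cast h1.1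
        rcases Finset.mem_union.mp h2 with h' | h'
        · exact_mod_cast h'
        · exfalso
          have heE := Finset.mem_sdiff.mp (hB h')
          have : ¬ (∀ x ∈ e, x ∉ S) := by
            intro hall
            exact heE.2 (Finset.mem_filter.mpr ⟨heE.1, hall⟩)
          push_neg at this
          obtain ⟨x, hxe, hxS⟩ := this
          induction e using Sym2.ind with
          | _ a b =>
            rcases Sym2.mem_iff.mp hxe with rfl | rfl
            · exact havoid x (w.fst_mem_support_of_mem_edges he) hxS
            · exact havoid x (w.snd_mem_support_of_mem_edges he) hxS
      exact ⟨w.transfer _ hedges, hwp.transfer hedges,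
        by rw [SimpleGraph.Walk.length_transfer]; exact hwl⟩
    · intro h u hu u' hu' hne
      obtain ⟨w, hwp, hwl⟩ := h u hu u' hu' hne
      have hedges : ∀ e ∈ w.edges,
          e ∈ (SimpleGraph.fromEdgeSet (↑(A ∪ B) : Set (Sym2 V))).edgeSet := by
        intro e he
        have h1 := w.edges_subset_edgeSet he
        rw [SimpleGraph.edgeSet_fromEdgeSet] at h1 ⊢
        refine ⟨?_, h1.2⟩
        have h2 : e ∈ A := by exact_mod_cast h1.1
        exact_mod_cast Finset.mem_union_left B h2
      exact ⟨w.transfer _ hedges, hwp.transfer hedges,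
        by rw [SimpleGraph.Walk.length_transfer]; exact hwl⟩
  -- now the sum manipulation
  rw [DCRK, DCRK]
  have step1 :
      ∑ E' ∈ E.powerset,
        (∏ e ∈ E', p e) * (∏ e ∈ E \ E', (1 - p e)) *
          (if PhiStructK K d E' then 1 else 0)
      = ∑ x ∈ F.powerset ×ˢ (E \ F).powerset,
        (∏ e ∈ x.1 ∪ x.2, p e) * (∏ e ∈ E \ (x.1 ∪ x.2), (1 - p e)) *
          (if PhiStructK K d (x.1 ∪ x.2) then 1 else 0) := by
    refine Finset.sum_nbij' (fun E' => (E' ∩ F, E' \ F)) (fun x => x.1 ∪ x.2)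
      ?_ ?_ ?_ ?_ ?_
    · intro a ha
      rw [mem_powerset] at ha
      rw [Finset.mem_product]
      exact ⟨mem_powerset.mpr (inter_subset_right),
        mem_powerset.mpr (sdiff_subset_sdiff ha (le_refl F))⟩
    · intro x hx
      rw [Finset.mem_product, mem_powerset, mem_powerset] at hx
      exact mem_powerset.mpr (union_subset (hx.1.trans hFE)
        (hx.2.trans (sdiff_subset)))
    · intro a _
      ext e
      simp only [Finset.mem_union, Finset.mem_inter, Finset.mem_sdiff]
      tauto
    · intro x hx
      rw [Finset.mem_product, mem_powerset, mem_powerset] at hx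
      have hd2 : ∀ e ∈ x.2, e ∉ F := fun e he => (Finset.mem_sdiff.mp (hx.2 he)).2
      have h1 : (x.1 ∪ x.2) ∩ F = x.1 := by
        ext e
        simp only [Finset.mem_union, Finset.mem_inter]
        constructor
        · rintro ⟨h | h, hf⟩
          · exact h
          · exact ((hd2 e h) hf).elim
        · intro h; exact ⟨Or.inl h, hx.1 h⟩
      have h2 : (x.1 ∪ x.2) \ F = x.2 := by
        ext e
        simp only [Finset.mem_union, Finset.mem_sdiff]
        constructor
        · rintro ⟨h | h, hf⟩
          · exact (hf (hx.1 h)).elim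
          · exact h
        · intro h; exact ⟨Or.inr h, hd2 e h⟩
      exact Prod.ext h1 h2
    · intro a _
      have h : a ∩ F ∪ a \ F = a := by
        ext e
        simp only [Finset.mem_union, Finset.mem_inter, Finset.mem_sdiff]
        tauto
      rw [h]
  rw [step1, Finset.sum_product]
  have step2 : ∀ A ∈ F.powerset,
      ∑ B ∈ (E \ F).powerset,
        (∏ e ∈ A ∪ B, p e) * (∏ e ∈ E \ (A ∪ B), (1 - p e)) *
          (if PhiStructK K d (A ∪ B) then 1 else 0)
      = (∏ e ∈ A, p e) * (∏ e ∈ F \ A, (1 - p e)) *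
          (if PhiStructK K d A then 1 else 0) := by
    intro A hA
    have hAF := mem_powerset.mp hA
    have hterm : ∀ B ∈ (E \ F).powerset,
        (∏ e ∈ A ∪ B, p e) * (∏ e ∈ E \ (A ∪ B), (1 - p e)) *
          (if PhiStructK K d (A ∪ B) then 1 else 0)
        = ((∏ e ∈ A, p e) * (∏ e ∈ F \ A, (1 - p e)) *
            (if PhiStructK K d A then 1 else 0)) *
          ((∏ e ∈ B, p e) * (∏ e ∈ (E \ F) \ B, (1 - p e))) := by
      intro B hB
      have hBEF := mem_powerset.mp hB
      have hdisj : Disjoint A B :=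
        Finset.disjoint_of_subset_left hAF
          (Finset.disjoint_of_subset_right hBEF Finset.disjoint_sdiff)
      have hsd : E \ (A ∪ B) = (F \ A) ∪ ((E \ F) \ B) := by
        ext e
        simp only [Finset.mem_sdiff, Finset.mem_union]
        constructor
        · rintro ⟨heE, hnot⟩
          push_neg at hnot
          by_cases heF : e ∈ F
          · exact Or.inl ⟨heF, hnot.1⟩
          · exact Or.inr ⟨⟨heE, heF⟩, hnot.2⟩
        · rintro (⟨heF, hnA⟩ | ⟨⟨heE, heF⟩, hnB⟩)
          · refine ⟨hFE heF, ?_⟩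
            rintro (h | h)
            · exact hnA h
            · exact ((Finset.mem_sdiff.mp (hBEF h)).2 heF).elim
          · refine ⟨heE, ?_⟩
            rintro (h | h)
            · exact heF (hAF h)
            · exact hnB h
      have hdisj2 : Disjoint (F \ A) ((E \ F) \ B) :=
        Finset.disjoint_of_subset_left (Finset.sdiff_subset)
          (Finset.disjoint_of_subset_right (Finset.sdiff_subset)
            Finset.disjoint_sdiff)
      rw [Finset.prod_union hdisj, hsd, Finset.prod_union hdisj2,
        if_congr (hphi A hA B hB) rfl rfl]
      ring
    rw [Finset.sum_congr rfl hterm, ← Finset.mul_sum]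
    have : ∑ B ∈ (E \ F).powerset, (∏ e ∈ B, p e) * ∏ e ∈ (E \ F) \ B, (1 - p e)
        = 1 := by
      rw [← Finset.prod_add]
      simp
    rw [this, mul_one]
  rw [Finset.sum_congr rfl step2]
end
end

section
/- Let G=(V,E) be a finite simple graph, K ⊆ V a terminal set, d a positive integer, and e ∈ E an edge. If for every pair of distinct terminals u,v ∈ K there is no simple u–v path in G with at most d edges containing e, then e is irrelevant for the K-terminal diameter-constrained structure function φ_d. -/
open Classical Finset

noncomputable section

/-- The edge `e` is irrelevant for the `K`-terminal structure function `φ_d`. -/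
def IrrelevantK {V : Type*} [Fintype V] [DecidableEq V]
    (G : SimpleGraph V) [DecidableRel G.Adj] (K : Set V) (d : ℕ) (e : Sym2 V) : Prop :=
  ∀ E' ⊆ G.edgeFinset,
    (PhiStructK K d (insert e E') ↔ PhiStructK K d (E'.erase e))

/-- if for every pair of distinct terminals `u, v ∈ K` there is no
simple `u`–`v` path in `G` with at most `d` edges containing the edge `e`, then `e`
is irrelevant for the `K`-terminal diameter-constrained structure function `φ_d`. -/
theorem irrelevantK_of_no_short_path
    {V : Type*} [Fintype V] [DecidableEq V] (G : SimpleGraph V) [DecidableRel G.Adj]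
    (K : Set V) (d : ℕ) (hd : 1 ≤ d) (e : Sym2 V) (he : e ∈ G.edgeSet)
    (h : ∀ u ∈ K, ∀ v ∈ K, u ≠ v →
      ¬ ∃ w : G.Walk u v, w.IsPath ∧ w.length ≤ d ∧ e ∈ w.edges) :
    IrrelevantK G K d e := by
  intro E' hE'
  have hGsub : ∀ x ∈ (insert e E' : Finset (Sym2 V)), x ∈ G.edgeSet := by
    intro x hx
    rcases Finset.mem_insert.mp hx with rfl | hx
    · exact he
    · exact SimpleGraph.mem_edgeFinset.mp (hE' hx)
  constructor
  · intro hphi u hu v hv huv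
    obtain ⟨w, hw, hlen⟩ := hphi u hu v hv huv
    have hedges : ∀ x ∈ w.edges, x ∈ (insert e E' : Finset (Sym2 V)) ∧ ¬ x.IsDiag := by
      intro x hx
      have := w.edges_subset_edgeSet hx
      rw [SimpleGraph.edgeSet_fromEdgeSet] at this
      exact ⟨by exact_mod_cast this.1, this.2⟩
    have hew : e ∉ w.edges := by
      intro hew
      apply h u hu v hv huv
      have hs : ∀ x ∈ w.edges, x ∈ G.edgeSet := fun x hx => hGsub x (hedges x hx).1
      exact ⟨w.transfer G hs, hw.transfer hs,
        by rw [SimpleGraph.Walk.length_transfer]; exact hlen,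
        by rw [SimpleGraph.Walk.edges_transfer]; exact hew⟩
    have hs2 : ∀ x ∈ w.edges,
        x ∈ (SimpleGraph.fromEdgeSet (↑(E'.erase e) : Set (Sym2 V))).edgeSet := by
      intro x hx
      rw [SimpleGraph.edgeSet_fromEdgeSet]
      obtain ⟨hx1, hx2⟩ := hedges x hx
      rcases Finset.mem_insert.mp hx1 with rfl | hx1
      · exact absurd hx hew
      · exact ⟨by exact_mod_cast Finset.mem_erase.mpr ⟨fun hxe => hew (by subst hxe; exact hx), hx1⟩, hx2⟩
    exact ⟨w.transfer _ hs2, hw.transfer hs2,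
      by rw [SimpleGraph.Walk.length_transfer]; exact hlen⟩
  · intro hphi u hu v hv huv
    obtain ⟨w, hw, hlen⟩ := hphi u hu v hv huv
    have hs : ∀ x ∈ w.edges,
        x ∈ (SimpleGraph.fromEdgeSet (↑(insert e E' : Finset (Sym2 V)) : Set (Sym2 V))).edgeSet := by
      intro x hx
      have := w.edges_subset_edgeSet hx
      rw [SimpleGraph.edgeSet_fromEdgeSet] at this ⊢
      refine ⟨?_, this.2⟩
      have hx1 : x ∈ E'.erase e := by exact_mod_cast this.1
      exact_mod_cast Finset.mem_insert_of_mem (Finset.mem_of_mem_erase hx1)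
    exact ⟨w.transfer _ hs, hw.transfer hs,
      by rw [SimpleGraph.Walk.length_transfer]; exact hlen⟩
end
end
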